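/- arXiv:math/0107003 — 3 statements merged into one kernel-verified Lean document; each statement's English description precedes it below -/
import Mathlib

section
/- For all integers N, M, n, m with N + M ≥ 0, the following product identity for extended q-binomial coefficients holds: [N n]⁺ · [M m]⁺ = Σ_{l ∈ ℤ} q^{(n−l)(m−l)} [N−m, n−l]⁺ · [M−n, m−l]⁺ · [N+M−n−m+l, l]⁺, where only finitely many summands are nonzero. -/
noncomputable section
open LaurentPolynomial

def gaussRec (v : LaurentPolynomial ℤ) : ℕ → ℕ → LaurentPolynomial ℤ
  | 0, 0 => 1
  | 0, _ + 1 => 0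
  | _ + 1, 0 => 1
  | n + 1, m + 1 => gaussRec v n (m + 1) * v ^ (m + 1) + gaussRec v n m

/-- `[n m]_v` for integer indices: the Gaussian binomial in the variable `v`,
zero unless `0 ≤ m ≤ n`. -/
def gaussZ (v : LaurentPolynomial ℤ) (n m : ℤ) : LaurentPolynomial ℤ :=
  if 0 ≤ m ∧ m ≤ n then gaussRec v n.toNat m.toNat else 0

/-- The Gaussian binomial coefficient `[n m]_q` as a Laurent polynomial in `q = T 1`. -/
def qbin (n m : ℤ) : LaurentPolynomial ℤ := gaussZ (T 1) n m

/-- The extended q-binomial coefficient `[n m]⁺_q ∈ ℤ[q,q⁻¹]`. -/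
def qbinPlus (n m : ℤ) : LaurentPolynomial ℤ :=
  if 0 ≤ n then qbin n m
  else (-1) ^ (n - m).natAbs * T (-(((n - m) ^ 2 + (n - m)) / 2)) *
    gaussZ (T (-1)) (-m - 1) (-n - 1)


/-! Both sides, as functions of `(N, M, n, m)`, satisfy the recurrence
`X (N+1) M (n+1) m = q^(n+1) X N M (n+1) m + X N M n m`, are symmetric under
`(N, n) ↔ (M, m)`, agree at `n = m = 0` and vanish when `N + M < n + m`. For the product this is
the q-Pascal rule for `[a b]⁺`, which holds for all integers `a, b`; for the sum it follows by
applying the Pascal rule to one factor of each summand and shifting `l ↦ l - 1` in one of the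
resulting sums. A function with these four properties vanishes: by induction on
`N + M - n - m`, the recurrence makes it invariant under `(N, n) ↦ (N + 1, n + 1)`, and together
with the symmetry this reduces everything to `n = m = 0`. -/

theorem eq_zero_of_pascal_recurrence {R : Type*} [NonUnitalNonAssocSemiring R]
    (D : ℤ → ℤ → ℤ → ℤ → R) (c : ℤ → R)
    (hrec : ∀ N M n m, D (N + 1) M (n + 1) m = c n * D N M (n + 1) m + D N M n m)
    (hcomm : ∀ N M n m, D N M n m = D M N m n) (hzero : ∀ N M, D N M 0 0 = 0)
    (hlt : ∀ N M n m, N + M < n + m → D N M n m = 0) (N M n m : ℤ) : D N M n m = 0 := by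
  suffices hlevel : ∀ k : ℕ, ∀ N M n m : ℤ, N + M - n - m < k → D N M n m = 0 from
    hlevel (N + M - n - m).toNat.succ N M n m (by omega)
  intro k
  induction k with
  | zero => exact fun N M n m h => hlt N M n m (by omega)
  | succ k ih =>
    have hshift (N M n m : ℤ) (h : N + M - n - m < k + 1) :
        D (N + 1) M (n + 1) m = D N M n m := by
      rw [hrec, ih _ _ _ _ (by omega), mul_zero, zero_add]
    have htranslate (j : ℤ) : ∀ N M n m : ℤ, N + M - n - m < k + 1 →
        D (N + j) M (n + j) m = D N M n m := by
      induction j using Int.induction_on with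
      | zero => simp
      | succ i hi =>
        intro N M n m h
        rw [← add_assoc, ← add_assoc, hshift _ _ _ _ (by omega), hi _ _ _ _ h]
      | pred i hi =>
        intro N M n m h
        rw [← hi _ _ _ _ h, ← hshift _ _ _ _ (by omega), add_assoc, add_assoc, sub_add_cancel]
    intro N M n m h
    calc D N M n m = D (N - n) M 0 m := by simpa using htranslate n (N - n) M 0 m (by omega)
      _ = D M (N - n) m 0 := hcomm ..
      _ = D (M - m) (N - n) 0 0 := by simpa using htranslate m (M - m) (N - n) 0 0 (by omega)
      _ = 0 := hzero _ _

theorem gaussRec_eq_zero_of_lt (v : LaurentPolynomial ℤ) {n m : ℕ} (h : n < m) :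
    gaussRec v n m = 0 := by
  induction n generalizing m with
  | zero => obtain ⟨m, rfl⟩ := Nat.exists_eq_add_one.2 h; rfl
  | succ n ih =>
    obtain ⟨m, rfl⟩ := Nat.exists_eq_add_one.2 (Nat.zero_lt_of_lt h)
    rw [gaussRec, ih (by omega), ih (by omega), zero_mul, zero_add]

theorem gaussRec_self (v : LaurentPolynomial ℤ) (n : ℕ) : gaussRec v n n = 1 := by
  induction n with
  | zero => rfl
  | succ n ih => rw [gaussRec, gaussRec_eq_zero_of_lt v n.lt_succ_self, zero_mul, zero_add, ih]

theorem gaussZ_eq_zero {v : LaurentPolynomial ℤ} {n m : ℤ} (h : ¬(0 ≤ m ∧ m ≤ n)) :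
    gaussZ v n m = 0 :=
  if_neg h

theorem gaussZ_natCast (v : LaurentPolynomial ℤ) (n m : ℕ) : gaussZ v n m = gaussRec v n m := by
  unfold gaussZ
  split_ifs with h
  · simp
  · rw [gaussRec_eq_zero_of_lt v (by omega)]

theorem gaussZ_self (v : LaurentPolynomial ℤ) {n : ℤ} (h : 0 ≤ n) : gaussZ v n n = 1 := by
  lift n to ℕ using h
  rw [gaussZ_natCast, gaussRec_self]

theorem gaussZ_zero_right (v : LaurentPolynomial ℤ) {n : ℤ} (h : 0 ≤ n) :
    gaussZ v n 0 = 1 := by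
  lift n to ℕ using h
  rw [← Nat.cast_zero, gaussZ_natCast]
  cases n <;> rfl

theorem gaussZ_T_succ_succ (s : ℤ) {n : ℤ} (hn : 0 ≤ n) (m : ℤ) :
    gaussZ (T s) (n + 1) (m + 1) = T (s * (m + 1)) * gaussZ (T s) n (m + 1) + gaussZ (T s) n m := by
  rcases lt_trichotomy m (-1) with hm | rfl | hm
  · rw [gaussZ_eq_zero (show ¬(0 ≤ m + 1 ∧ m + 1 ≤ n + 1) by omega),
      gaussZ_eq_zero (show ¬(0 ≤ m + 1 ∧ m + 1 ≤ n) by omega),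
      gaussZ_eq_zero (show ¬(0 ≤ m ∧ m ≤ n) by omega), mul_zero, add_zero]
  · rw [neg_add_cancel, gaussZ_eq_zero (show ¬(0 ≤ (-1 : ℤ) ∧ -1 ≤ n) by omega), add_zero,
      gaussZ_zero_right _ hn, gaussZ_zero_right _ (by omega), mul_zero, T_zero, one_mul]
  · lift n to ℕ using hn
    lift m to ℕ using (by omega)
    rw [← Nat.cast_succ, ← Nat.cast_succ, gaussZ_natCast, gaussZ_natCast, gaussZ_natCast,
      gaussRec, T_pow, mul_comm, mul_comm s]

def qbinPlusFactor (d : ℤ) : LaurentPolynomial ℤ := (-1) ^ d.natAbs * T (-((d ^ 2 + d) / 2))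

theorem qbinPlusFactor_sub_one (d : ℤ) : qbinPlusFactor (d - 1) = -(T d * qbinPlusFactor d) := by
  have hsign : ((-1) ^ (d - 1).natAbs : LaurentPolynomial ℤ) = -(-1) ^ d.natAbs := by
    rw [neg_eq_neg_one_mul ((-1 : LaurentPolynomial ℤ) ^ _), ← pow_succ']
    exact neg_one_pow_congr (by
      rw [Int.natAbs_even, Nat.even_add_one, Int.natAbs_even, Int.even_sub_one])
  have hexp : ((d - 1) ^ 2 + (d - 1)) / 2 = (d ^ 2 + d) / 2 + -d := by
    rw [← Int.add_mul_ediv_right _ _ two_ne_zero]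
    ring_nf
  rw [qbinPlusFactor, qbinPlusFactor, hsign, hexp, neg_add, neg_neg, T_add]
  ring

theorem qbinPlus_of_nonneg {a : ℤ} (ha : 0 ≤ a) (b : ℤ) : qbinPlus a b = gaussZ (T 1) a b :=
  if_pos ha

theorem qbinPlus_of_neg {a : ℤ} (ha : a < 0) (b : ℤ) :
    qbinPlus a b = qbinPlusFactor (a - b) * gaussZ (T (-1)) (-b - 1) (-a - 1) :=
  if_neg (not_le.2 ha)

theorem qbinPlus_eq_zero_of_lt {a b : ℤ} (h : a < b) : qbinPlus a b = 0 := by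
  rcases le_or_gt 0 a with ha | ha
  · rw [qbinPlus_of_nonneg ha, gaussZ_eq_zero (by omega)]
  · rw [qbinPlus_of_neg ha, gaussZ_eq_zero (by omega), mul_zero]

theorem qbinPlus_eq_zero_of_neg {a b : ℤ} (ha : 0 ≤ a) (hb : b < 0) : qbinPlus a b = 0 := by
  rw [qbinPlus_of_nonneg ha, gaussZ_eq_zero (by omega)]

theorem le_and_nonneg_of_qbinPlus_ne_zero {a b : ℤ} (h : qbinPlus a b ≠ 0) :
    b ≤ a ∧ (0 ≤ a → 0 ≤ b) :=
  ⟨le_of_not_gt fun hab => h (qbinPlus_eq_zero_of_lt hab),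
    fun ha => le_of_not_gt fun hb => h (qbinPlus_eq_zero_of_neg ha hb)⟩

theorem qbinPlus_self (a : ℤ) : qbinPlus a a = 1 := by
  rcases le_or_gt 0 a with ha | ha
  · rw [qbinPlus_of_nonneg ha, gaussZ_self _ ha]
  · rw [qbinPlus_of_neg ha, gaussZ_self _ (by omega), sub_self, qbinPlusFactor]
    simp

theorem qbinPlus_zero_right (a : ℤ) : qbinPlus a 0 = if 0 ≤ a then 1 else 0 := by
  split_ifs with ha
  · rw [qbinPlus_of_nonneg ha, gaussZ_zero_right _ ha]
  · exact qbinPlus_eq_zero_of_lt (by omega)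

theorem qbinPlus_succ_succ (a b : ℤ) :
    qbinPlus (a + 1) (b + 1) = T (b + 1) * qbinPlus a (b + 1) + qbinPlus a b := by
  rcases lt_or_ge a b with hab | hba
  · rw [qbinPlus_eq_zero_of_lt (by omega), qbinPlus_eq_zero_of_lt (by omega),
      qbinPlus_eq_zero_of_lt hab, mul_zero, add_zero]
  rcases le_or_gt 0 a with ha | ha
  · rw [qbinPlus_of_nonneg (by omega), qbinPlus_of_nonneg ha, qbinPlus_of_nonneg ha,
      gaussZ_T_succ_succ 1 ha, one_mul]
  rcases eq_or_lt_of_le (show a ≤ -1 by omega) with rfl | ha'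
  · rcases eq_or_lt_of_le hba with rfl | hb
    · rw [neg_add_cancel, qbinPlus_self, qbinPlus_self, qbinPlus_eq_zero_of_lt (by norm_num),
        mul_zero, zero_add]
    have hT : (T (b + 1) * T (-1 - b) : LaurentPolynomial ℤ) = 1 := by
      rw [← T_add, ← T_zero]; ring_nf
    rw [neg_add_cancel, qbinPlus_eq_zero_of_neg le_rfl (by omega), qbinPlus_of_neg ha,
      qbinPlus_of_neg ha, show -(-1 : ℤ) - 1 = 0 by norm_num, gaussZ_zero_right _ (by omega),
      gaussZ_zero_right _ (by omega), show -1 - (b + 1) = -1 - b - 1 by ring,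
      qbinPlusFactor_sub_one]
    linear_combination qbinPlusFactor (-1 - b) * hT
  · -- the Pascal rule of the mirrored coefficient `[-b - 1, -a - 1]` in `q⁻¹`
    have hg := gaussZ_T_succ_succ (-1) (show 0 ≤ -(b + 1) - 1 by omega) (-(a + 1) - 1)
    rw [show -(b + 1) - 1 + 1 = -b - 1 by ring, show -(a + 1) - 1 + 1 = -a - 1 by ring] at hg
    have hT : (T (b + 1) * T (a - b) : LaurentPolynomial ℤ) = T (-1 * (-a - 1)) := by
      rw [← T_add]; ring_nf
    rw [qbinPlus_of_neg (by omega), qbinPlus_of_neg ha, qbinPlus_of_neg ha, hg,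
      show a + 1 - (b + 1) = a - b by ring, show a - (b + 1) = a - b - 1 by ring,
      qbinPlusFactor_sub_one]
    linear_combination
      qbinPlusFactor (a - b) * gaussZ (T (-1)) (-(b + 1) - 1) (-a - 1) * hT

def qbinProductTerm (N M n m l : ℤ) : LaurentPolynomial ℤ :=
  T ((n - l) * (m - l)) * qbinPlus (N - m) (n - l) * qbinPlus (M - n) (m - l) *
    qbinPlus (N + M - n - m + l) l

theorem qbinProductTerm_comm (N M n m l : ℤ) :
    qbinProductTerm N M n m l = qbinProductTerm M N m n l := by
  rw [qbinProductTerm, qbinProductTerm, mul_comm (m - l),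
    show M + N - m - n = N + M - n - m by ring]
  ring

theorem le_and_nonneg_of_mul_qbinPlus_ne_zero {x : LaurentPolynomial ℤ} {a b c d e f : ℤ}
    (h : x * qbinPlus a b * qbinPlus c d * qbinPlus e f ≠ 0) :
    (b ≤ a ∧ (0 ≤ a → 0 ≤ b)) ∧ (d ≤ c ∧ (0 ≤ c → 0 ≤ d)) ∧ (f ≤ e ∧ (0 ≤ e → 0 ≤ f)) :=
  ⟨le_and_nonneg_of_qbinPlus_ne_zero
      (right_ne_zero_of_mul (left_ne_zero_of_mul (left_ne_zero_of_mul h))),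
    le_and_nonneg_of_qbinPlus_ne_zero (right_ne_zero_of_mul (left_ne_zero_of_mul h)),
    le_and_nonneg_of_qbinPlus_ne_zero (right_ne_zero_of_mul h)⟩

theorem hasFiniteSupport_mul_qbinPlus {a c K : ℤ} (hK : K ≤ a + c + 1)
    (f : ℤ → LaurentPolynomial ℤ) (b d : ℤ) :
    Function.HasFiniteSupport fun l =>
      f l * qbinPlus a (b - l) * qbinPlus c (d - l) * qbinPlus (K + l) l := by
  refine (Set.finite_Icc (b - a) (max b d)).subset fun l hl => ?_
  have := le_and_nonneg_of_mul_qbinPlus_ne_zero (Function.mem_support.1 hl)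
  simp only [Set.mem_Icc, le_max_iff]
  omega

theorem hasFiniteSupport_qbinProductTerm (N M n m : ℤ) :
    (qbinProductTerm N M n m).HasFiniteSupport :=
  hasFiniteSupport_mul_qbinPlus (by omega) _ n m

/-- `qbinProductTerm₁` and `qbinProductTerm₂` are the two summands into which the Pascal rule for
the factor `[M - n, m - l]⁺` splits `qbinProductTerm`. -/
def qbinProductTerm₁ (N M n m l : ℤ) : LaurentPolynomial ℤ :=
  T ((n + 1 - l) * (m - l)) * qbinPlus (N - m) (n - l) * qbinPlus (M - n - 1) (m - l) *
    qbinPlus (N + M - n - m + l) l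

def qbinProductTerm₂ (N M n m l : ℤ) : LaurentPolynomial ℤ :=
  T ((n - l) * (m - l)) * qbinPlus (N - m) (n - l) * qbinPlus (M - n - 1) (m - 1 - l) *
    qbinPlus (N + M - n - m + l) l

theorem qbinProductTerm_eq_add (N M n m l : ℤ) :
    qbinProductTerm N M n m l = qbinProductTerm₁ N M n m l + qbinProductTerm₂ N M n m l := by
  have h := qbinPlus_succ_succ (M - n - 1) (m - 1 - l)
  rw [sub_add_cancel, show m - 1 - l + 1 = m - l by ring] at h
  have hT : (T ((n + 1 - l) * (m - l)) : LaurentPolynomial ℤ) =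
      T ((n - l) * (m - l)) * T (m - l) := by
    rw [← T_add]; ring_nf
  rw [qbinProductTerm, h, qbinProductTerm₁, qbinProductTerm₂, hT]
  ring

theorem qbinProductTerm_succ_succ (N M n m l : ℤ) :
    qbinProductTerm (N + 1) M (n + 1) m l = T (n + 1) * qbinProductTerm N M (n + 1) m l +
      qbinProductTerm₁ N M n m l + qbinProductTerm₂ N M n m (l - 1) := by
  have h₁ := qbinPlus_succ_succ (N - m) (n - l)
  have h₃ := qbinPlus_succ_succ (N + M - n - m + l - 1) (l - 1)
  rw [sub_add_cancel, sub_add_cancel] at h₃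
  have hT₁ : (T ((n - l + 1) * (m - l)) : LaurentPolynomial ℤ) * T (n - l + 1) * T l =
      T (n + 1) * T ((n - l + 1) * (m - l)) := by
    rw [← T_add, ← T_add, ← T_add]; ring_nf
  have hT₂ : (T ((n - l + 1) * (m - l)) : LaurentPolynomial ℤ) * T (n - l + 1) =
      T ((n - l + 1) * (m - l + 1)) := by
    rw [← T_add]; ring_nf
  rw [qbinProductTerm, qbinProductTerm, qbinProductTerm₁, qbinProductTerm₂,
    show N + 1 - m = N - m + 1 by ring, show n + 1 - l = n - l + 1 by ring,
    show M - (n + 1) = M - n - 1 by ring, show n - (l - 1) = n - l + 1 by ring,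
    show m - (l - 1) = m - l + 1 by ring, show m - 1 - (l - 1) = m - l by ring,
    show N + 1 + M - (n + 1) - m + l = N + M - n - m + l by ring,
    show N + M - (n + 1) - m + l = N + M - n - m + l - 1 by ring,
    show N + M - n - m + (l - 1) = N + M - n - m + l - 1 by ring]
  linear_combination
    T ((n - l + 1) * (m - l)) * qbinPlus (M - n - 1) (m - l) *
      qbinPlus (N + M - n - m + l) l * h₁ +
    T ((n - l + 1) * (m - l)) * T (n - l + 1) * qbinPlus (N - m) (n - l + 1) *
      qbinPlus (M - n - 1) (m - l) * h₃ +
    qbinPlus (N - m) (n - l + 1) * qbinPlus (M - n - 1) (m - l) *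
      qbinPlus (N + M - n - m + l - 1) l * hT₁ +
    qbinPlus (N - m) (n - l + 1) * qbinPlus (M - n - 1) (m - l) *
      qbinPlus (N + M - n - m + l - 1) (l - 1) * hT₂

theorem finsum_qbinProductTerm_succ_succ (N M n m : ℤ) :
    ∑ᶠ l, qbinProductTerm (N + 1) M (n + 1) m l =
      T (n + 1) * ∑ᶠ l, qbinProductTerm N M (n + 1) m l + ∑ᶠ l, qbinProductTerm N M n m l := by
  have hF := hasFiniteSupport_qbinProductTerm N M (n + 1) m
  have hF₁ : (qbinProductTerm₁ N M n m).HasFiniteSupport :=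
    hasFiniteSupport_mul_qbinPlus (by omega) _ n m
  have hF₂ : (qbinProductTerm₂ N M n m).HasFiniteSupport :=
    hasFiniteSupport_mul_qbinPlus (by omega) _ n (m - 1)
  have hF₂_shift : (fun l => qbinProductTerm₂ N M n m (l - 1)).HasFiniteSupport :=
    hF₂.fun_comp_of_injective (sub_left_injective (b := 1))
  have hshift : ∑ᶠ l, qbinProductTerm₂ N M n m (l - 1) = ∑ᶠ l, qbinProductTerm₂ N M n m l :=
    finsum_comp_equiv (Equiv.subRight 1)
  have hTF : (fun l => T (n + 1) * qbinProductTerm N M (n + 1) m l).HasFiniteSupport := by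
    fun_prop
  simp only [qbinProductTerm_succ_succ, qbinProductTerm_eq_add N M n m]
  rw [finsum_add_distrib (by fun_prop) hF₂_shift, finsum_add_distrib hTF hF₁, mul_finsum' _ _ hF,
    hshift, finsum_add_distrib hF₁ hF₂, add_assoc]

theorem finsum_qbinProductTerm_zero_zero (N M : ℤ) :
    ∑ᶠ l, qbinProductTerm N M 0 0 l = qbinPlus N 0 * qbinPlus M 0 := by
  rw [finsum_eq_single _ 0 fun l hl => by_contra fun h => hl ?_]
  · simp only [qbinProductTerm, qbinPlus_zero_right, sub_zero, mul_zero, T_zero, add_zero]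
    split_ifs <;> first | omega | simp
  · have := le_and_nonneg_of_mul_qbinPlus_ne_zero h
    omega

theorem finsum_qbinProductTerm_of_lt {N M n m : ℤ} (h : N + M < n + m) :
    ∑ᶠ l, qbinProductTerm N M n m l = 0 :=
  finsum_eq_zero_of_forall_eq_zero fun l => by
    rw [qbinProductTerm, qbinPlus_eq_zero_of_lt (by omega : N + M - n - m + l < l), mul_zero]

theorem qbinPlus_mul_qbinPlus_of_lt {N M n m : ℤ} (h : N + M < n + m) :
    qbinPlus N n * qbinPlus M m = 0 := by
  rcases lt_or_ge N n with hN | hN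
  · rw [qbinPlus_eq_zero_of_lt hN, zero_mul]
  · rw [qbinPlus_eq_zero_of_lt (by omega : M < m), mul_zero]

theorem qbinPlus_product_general (N M n m : ℤ) :
    (Function.support (fun l : ℤ =>
        T ((n - l) * (m - l)) * qbinPlus (N - m) (n - l) * qbinPlus (M - n) (m - l) *
          qbinPlus (N + M - n - m + l) l)).Finite ∧
    qbinPlus N n * qbinPlus M m =
      ∑ᶠ l : ℤ, T ((n - l) * (m - l)) * qbinPlus (N - m) (n - l) *
        qbinPlus (M - n) (m - l) * qbinPlus (N + M - n - m + l) l := by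
  refine ⟨hasFiniteSupport_qbinProductTerm N M n m, sub_eq_zero.1 ?_⟩
  exact eq_zero_of_pascal_recurrence
    (fun N M n m => qbinPlus N n * qbinPlus M m - ∑ᶠ l, qbinProductTerm N M n m l)
    (fun n => T (n + 1))
    (fun N M n m => by
      rw [qbinPlus_succ_succ, finsum_qbinProductTerm_succ_succ]
      ring)
    (fun N M n m => by simp only [mul_comm (qbinPlus N n), qbinProductTerm_comm N M])
    (fun N M => by rw [finsum_qbinProductTerm_zero_zero, sub_self])
    (fun N M n m h => by
      rw [qbinPlus_mul_qbinPlus_of_lt h, finsum_qbinProductTerm_of_lt h, sub_zero])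
    N M n m

/-- the product identity for extended q-binomial coefficients. -/
theorem qbinPlus_product (N M n m : ℤ) (h : 0 ≤ N + M) :
    (Function.support (fun l : ℤ =>
        T ((n - l) * (m - l)) * qbinPlus (N - m) (n - l) * qbinPlus (M - n) (m - l) *
          qbinPlus (N + M - n - m + l) l)).Finite ∧
    qbinPlus N n * qbinPlus M m =
      ∑ᶠ l : ℤ, T ((n - l) * (m - l)) * qbinPlus (N - m) (n - l) *
        qbinPlus (M - n) (m - l) * qbinPlus (N + M - n - m + l) l :=
  qbinPlus_product_general N M n m

end
end

section
/- With the lattice-sum notation: suppose n_+ < 0 and n_− ≥ 0. If n_+ ≤ (2N_+ − N_{d−1})/(2p−d−2), then P_N(n) = Π_{a ∈ I} [e_a·(N + n − n𝒜), e_a·n]⁺_q = 0. Equivalently, nonvanishing of P_N(n) with n_+ < 0 ≤ n_− forces (2p−d−2)·n_+ > 2N_+ − N_{d−1}. -/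
/-!
If the `+`-factor has nonnegative top entry `N_+ + n_+ - (n𝒜)_+`, it vanishes because
`n_+ < 0`. Otherwise `(n𝒜)_+ > N_+ + n_+`. In the columns of `𝒜` one has
`2𝒜_{·,+} - 𝒜_{·,d-1} = (2p-d) e_+ - (2p-d-2) e_-`, so `n_- ≥ 0` and the bound on `n_+`
give `(n𝒜)_{d-1} > N_{d-1}`: the `(d-1)`-factor has top entry below its bottom entry `n_{d-1}`
and vanishes.
-/

noncomputable section
open LaurentPolynomial

/-- The symmetric `(d+2) × (d+2)` matrix `𝒜`, with indices `0 ↦ +`, `1 ↦ −`,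
`i+2 ↦ i` for `0 ≤ i ≤ d-1`. -/
def Amat (p d : ℕ) : Matrix (Fin (d + 2)) (Fin (d + 2)) ℤ := fun i j =>
  if (i : ℕ) = 0 ∧ (j : ℕ) = 0 then (p : ℤ)
  else if (i : ℕ) = 1 ∧ (j : ℕ) = 1 then (p : ℤ)
  else if ((i : ℕ) = 0 ∧ (j : ℕ) = 1) ∨ ((i : ℕ) = 1 ∧ (j : ℕ) = 0) then -(p : ℤ) + d + 1
  else if (i : ℕ) ≤ 1 then (j : ℤ) - 1
  else if (j : ℕ) ≤ 1 then (i : ℤ) - 1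
  else 2 * min ((i : ℤ) - 1) ((j : ℤ) - 1)

/-- The tridiagonal matrix `T_m` with diagonal `(2, ..., 2, 1)` and `-1` on the
off-diagonals, so that `(T_m⁻¹)_{ij} = min(i,j)`. -/
def Tmat (m : ℕ) : Matrix (Fin m) (Fin m) ℤ := fun i j =>
  if i = j then (if (i : ℕ) = m - 1 then 1 else 2)
  else if (i : ℕ) + 1 = (j : ℕ) ∨ (j : ℕ) + 1 = (i : ℕ) then -1 else 0

/-- `N' = (N_0, ..., N_{d-1}, N_+ + N_-)`. -/
def Nprime (d : ℕ) (N : Fin (d + 2) → ℤ) : Fin (d + 1) → ℤ := fun i =>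
  if h : (i : ℕ) < d then N ⟨(i : ℕ) + 2, by omega⟩ else N 0 + N 1

/-- `L = N' T_{d+1}` (as a row vector times the matrix); `Lvec d N j` is `L_{j+1}`. -/
def Lvec (d : ℕ) (N : Fin (d + 2) → ℤ) : Fin (d + 1) → ℤ := fun j =>
  ∑ i, Nprime d N i * Tmat (d + 1) i j

/-- `(n𝒜)_a = Σ_j n_j 𝒜_{ja}`. -/
def rowA (p d : ℕ) (n : Fin (d + 2) → ℤ) (a : Fin (d + 2)) : ℤ :=
  ∑ j, n j * Amat p d j a

/-- `P_N(n) = Π_{a ∈ I} [e_a·(N + n − n𝒜), e_a·n]⁺_q`. -/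
def Pfun (p d : ℕ) (N n : Fin (d + 2) → ℤ) : LaurentPolynomial ℤ :=
  ∏ a, qbinPlus (N a + n a - rowA p d n a) (n a)

theorem qbinPlus_eq_zero_of_lt_s15 {n m : ℤ} (h : n < m) : qbinPlus n m = 0 := by
  by_cases hn : 0 ≤ n
  · simp [qbinPlus, qbin, gaussZ, hn, h.not_ge]
  · simp [qbinPlus, gaussZ, hn, show ¬-n - 1 ≤ -m - 1 by omega]

theorem qbinPlus_eq_zero_of_nonneg_of_neg {n m : ℤ} (hn : 0 ≤ n) (hm : m < 0) :
    qbinPlus n m = 0 := by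
  simp [qbinPlus, qbin, gaussZ, hn, hm.not_ge]

section

variable {p d : ℕ} {N n : Fin (d + 2) → ℤ}

theorem Pfun_eq_zero_of_lt_rowA (a : Fin (d + 2)) (h : N a < rowA p d n a) :
    Pfun p d N n = 0 :=
  Finset.prod_eq_zero (Finset.mem_univ a) (qbinPlus_eq_zero_of_lt_s15 (by omega))

theorem Pfun_eq_zero_of_neg (a : Fin (d + 2)) (hn : n a < 0) (h : rowA p d n a ≤ N a + n a) :
    Pfun p d N n = 0 :=
  Finset.prod_eq_zero (Finset.mem_univ a) (qbinPlus_eq_zero_of_nonneg_of_neg (by omega) hn)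

end

theorem Amat_zero_last (p : ℕ) {d : ℕ} (hd : 1 ≤ d) : Amat p d 0 (Fin.last (d + 1)) = d := by
  simp [Amat, Nat.one_le_iff_ne_zero.mp hd]

theorem Amat_one_last (p : ℕ) {d : ℕ} (hd : 1 ≤ d) : Amat p d 1 (Fin.last (d + 1)) = d := by
  simp [Amat, Nat.one_le_iff_ne_zero.mp hd]

theorem Amat_succ_succ_last (p : ℕ) {d : ℕ} (j : Fin d) :
    Amat p d j.succ.succ (Fin.last (d + 1)) = 2 * Amat p d j.succ.succ 0 := by
  have hj : (j : ℤ) + 1 ≤ d := by exact_mod_cast j.isLt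
  simp [Amat, hj, j.pos.ne']

theorem two_mul_rowA_zero_sub_rowA_last (p : ℕ) {d : ℕ} (hd : 1 ≤ d) (n : Fin (d + 2) → ℤ) :
    2 * rowA p d n 0 - rowA p d n (Fin.last (d + 1)) =
      (2 * p - d) * n 0 - (2 * p - d - 2) * n 1 := by
  have htail : ∑ j : Fin d, (2 * (n j.succ.succ * Amat p d j.succ.succ 0) -
      n j.succ.succ * Amat p d j.succ.succ (Fin.last (d + 1))) = 0 :=
    Finset.sum_eq_zero fun j _ => by rw [Amat_succ_succ_last]; ring
  rw [rowA, rowA, Finset.mul_sum, ← Finset.sum_sub_distrib, Fin.sum_univ_succ,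
    Fin.sum_univ_succ, htail]
  simp only [Fin.succ_zero_eq_one]
  rw [Amat_zero_last p hd, Amat_one_last p hd, show Amat p d 0 0 = p by simp [Amat],
    show Amat p d 1 0 = -p + d + 1 by simp [Amat]]
  ring

/-- if `n_+ < 0 ≤ n_-` and `(2p-d-2) n_+ ≤ 2N_+ - N_{d-1}`
(i.e. `n_+ ≤ (2N_+ - N_{d-1})/(2p-d-2)`), then `P_N(n) = 0`. -/
theorem Pfun_vanish_plus_neg (p d : ℕ) (hd : d < 2 * p - 2) (hd1 : 1 ≤ d)
    (N n : Fin (d + 2) → ℤ)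
    (hnp : n 0 < 0) (hnm : 0 ≤ n 1)
    (hC : (2 * (p : ℤ) - d - 2) * n 0 ≤ 2 * N 0 - N ⟨d + 1, by omega⟩) :
    Pfun p d N n = 0 := by
  rcases le_or_gt (rowA p d n 0) (N 0 + n 0) with h0 | h0
  · exact Pfun_eq_zero_of_neg 0 hnp h0
  · apply Pfun_eq_zero_of_lt_rowA (Fin.last (d + 1))
    have hcol := two_mul_rowA_zero_sub_rowA_last p hd1 n
    have hn1 : 0 ≤ (2 * (p : ℤ) - d - 2) * n 1 := mul_nonneg (by omega) hnm
    change _ ≤ _ - N (Fin.last (d + 1)) at hC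
    linarith

end
end

section
/- Let p ≥ 1 and suppose d_{p,r}[i¹,j¹;...;i^k,j^k] is defined by Π_{s=1}^k (ξ^{−j^s} + ... + ξ^{−j^s+i^s}) = Σ_{r=0}^{p−1} d_{p,r} ξ^r with ξ a primitive p-th root of unity, 0 ≤ i^s ≤ p. If at least one i^s equals p−1 (equivalently L_{p−1} ≥ 1, where L = N'T_p as in the associated vector construction), then d_{p,r}[i¹,j¹;...;i^k,j^k] = 2^{L_1} 3^{L_2} ··· (p−1)^{L_{p−2}} p^{L_{p−1}−1} (p+1)^{L_p}, independent of r. -/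
noncomputable section

/-- `N = Σ_s N^{i^s, j^s}` where `N^{i,j} = (i−j, j; 1, 2, ..., i−1, i, ..., i)`,
with indices `0 ↦ +`, `1 ↦ −`, `a ↦ N_{a-2}` for `a ≥ 2` (and `N_m = min(m+1, i)`). -/
def Nvec (p k : ℕ) (i : Fin k → ℕ) (j : Fin k → ℤ) : Fin (p + 1) → ℤ := fun a =>
  ∑ s, if (a : ℕ) = 0 then (i s : ℤ) - j s
    else if (a : ℕ) = 1 then j s
    else min ((a : ℤ) - 1) (i s : ℤ)

/-- `N' = (N_0, ..., N_{p-2}, N_+ + N_-)`. -/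
def NprimeP (p : ℕ) (N : Fin (p + 1) → ℤ) : Fin p → ℤ := fun a =>
  if h : (a : ℕ) < p - 1 then N ⟨(a : ℕ) + 2, by omega⟩ else N 0 + N 1

/-- `L = N' T_p`; `LvecP p N j` is the (1-based) component `L_{j+1}`. -/
def LvecP (p : ℕ) (N : Fin (p + 1) → ℤ) : Fin p → ℤ := fun j =>
  ∑ a, NprimeP p N a * Tmat p a j

/-- The product `Π_{s=1}^k (ξ^{-j^s} + ξ^{-j^s+1} + ... + ξ^{-j^s+i^s})` as an element
of the group ring `ℤ[ℤ/p]` (`ξ` being the generator); its coefficient at `r` is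
`d_{p,r}[i¹,j¹;...;i^k,j^k]`. -/
def prodElt (p k : ℕ) (i : Fin k → ℕ) (j : Fin k → ℤ) : AddMonoidAlgebra ℤ (ZMod p) :=
  ∏ s, ∑ t ∈ Finset.range (i s + 1), AddMonoidAlgebra.single (((t : ℤ) - j s : ℤ) : ZMod p) 1

/-- The coefficient of `x^m` (for `m ∈ ℤ`) of an integer polynomial. -/
def coeffZ (P : Polynomial ℤ) (m : ℤ) : ℤ := if 0 ≤ m then P.coeff m.toNat else 0

/-- The generating polynomial `Π_{j=1}^p (1 + x + ... + x^j)^{L_j}`, whose coefficients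
are the supernomial coefficients at `q = 1`. -/
def genPoly (p : ℕ) (L : Fin p → ℤ) : Polynomial ℤ :=
  ∏ jj : Fin p, (∑ t ∈ Finset.range ((jj : ℕ) + 2), Polynomial.X ^ t) ^ (L jj).toNat

/-! The factor with `i^s = p - 1` is the sum `u` of all elements of `ℤ[ℤ/p]`, and `u * x` is
`ε(x) • u` for the augmentation `ε`. So every coefficient of the product is the product of the
augmentations `i^s + 1` of the remaining factors, i.e. `(∏_s (i^s + 1)) / p`. Since `N'` is the
sum over `s` of the vectors `(min(a, i^s))_{a = 1..p}`, and `T_p` is the inverse of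
`(min(a, b))_{a,b}`, the vector `L = N'T_p` counts the `s` with `i^s = m` in its `m`-th entry;
hence `∏_s (i^s + 1) = ∏_m (m + 1)^{L_m}`. -/

open Finset

section GroupRing

open AddMonoidAlgebra

variable {R : Type*} [CommSemiring R]

variable (R) in
def augmentation (G : Type*) [AddMonoid G] : AddMonoidAlgebra R G →ₐ[R] R :=
  AddMonoidAlgebra.lift R R G 1

@[simp]
lemma augmentation_single {G : Type*} [AddMonoid G] (g : G) (r : R) :
    augmentation R G (single g r) = r := by
  simp [augmentation, lift_single]

lemma coeff_sum_single_one {G : Type*} [Fintype G] (g : G) :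
    (∑ h : G, single h (1 : R)).coeff g = 1 := by
  classical
  simp [coeff_sum, sum_apply', Finsupp.single_apply]

lemma coeff_sum_single_one_mul {G : Type*} [AddGroup G] [Fintype G] (x : AddMonoidAlgebra R G)
    (g : G) : ((∑ h : G, single h (1 : R)) * x).coeff g = augmentation R G x := by
  induction x using AddMonoidAlgebra.induction with
  | zero => simp
  | single_add a b f _ _ ih =>
    rw [mul_add, map_add, coeff_add, Finsupp.add_apply, ih, coeff_mul_single_apply,
      coeff_sum_single_one, one_mul, augmentation_single]

end GroupRing

lemma ZMod.sum_range_natCast_add {M : Type*} [AddCommMonoid M] (p : ℕ) [NeZero p]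
    (f : ZMod p → M) (c : ZMod p) : ∑ t ∈ range p, f (t + c) = ∑ g, f g := by
  obtain ⟨n, rfl⟩ : ∃ n, p = n + 1 := ⟨p - 1, (Nat.succ_pred_eq_of_ne_zero (NeZero.ne p)).symm⟩
  rw [← Fin.sum_univ_eq_sum_range (fun t => f (t + c))]
  exact Fintype.sum_equiv (Equiv.addRight c) _ _ fun x =>
    congrArg (fun g => f (g + c)) (ZMod.natCast_zmod_val x)

open AddMonoidAlgebra in
lemma coeff_prodElt {p k : ℕ} [NeZero p] {i : Fin k → ℕ} (j : Fin k → ℤ) {s₀ : Fin k}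
    (hs₀ : i s₀ + 1 = p) (r : ZMod p) :
    (prodElt p k i j).coeff r = ∏ s ∈ univ.erase s₀, ((i s : ℤ) + 1) := by
  have hfull : ∑ t ∈ range (i s₀ + 1), single (((t : ℤ) - j s₀ : ℤ) : ZMod p) (1 : ℤ) =
      ∑ g, single g 1 := by
    rw [hs₀]
    simpa [sub_eq_add_neg] using
      ZMod.sum_range_natCast_add p (fun g => single g (1 : ℤ)) (-(j s₀ : ZMod p))
  rw [prodElt, ← mul_prod_erase _ _ (mem_univ s₀), hfull,
    coeff_sum_single_one_mul, map_prod]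
  refine prod_congr rfl fun s _ => ?_
  simp [map_sum]

lemma Tmat_apply (p : ℕ) (a m : Fin p) :
    Tmat p a m = (if (a : ℕ) = m then (if (m : ℕ) = p - 1 then 1 else 2) else 0)
      - (if (a : ℕ) = m + 1 then 1 else 0) - (if (a : ℕ) + 1 = m then 1 else 0) := by
  simp only [Tmat, Fin.ext_iff]
  split_ifs <;> omega

lemma sum_mul_Tmat {p : ℕ} (f : ℕ → ℤ) (m : Fin p) :
    ∑ a : Fin p, f a * Tmat p a m = (if (m : ℕ) = p - 1 then 1 else 2) * f m
      - (if (m : ℕ) + 1 < p then f (m + 1) else 0) - (if 0 < (m : ℕ) then f (m - 1) else 0) := by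
  have hm := m.isLt
  simp only [Tmat_apply]
  rw [Fin.sum_univ_eq_sum_range (fun a => f a * ((if a = m then (if (m : ℕ) = p - 1 then 1 else 2)
    else 0) - (if a = m + 1 then 1 else 0) - (if a + 1 = m then 1 else 0))) p]
  have hprev : ∑ a ∈ range p, (if a + 1 = (m : ℕ) then f a else 0) =
      if 0 < (m : ℕ) then f (m - 1) else 0 := by
    rcases Nat.eq_zero_or_pos (m : ℕ) with h | h
    · simp [h]
    · simp_rw [show ∀ a, a + 1 = (m : ℕ) ↔ a = m - 1 from fun a => by omega]
      simp [h, hm.trans_le' (Nat.sub_le _ _)]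
  simp [mul_sub, sum_sub_distrib, hprev, mul_comm]

lemma sum_min_mul_Tmat {p I : ℕ} (hI : I ≤ p) (m : Fin p) :
    ∑ a : Fin p, min ((a : ℤ) + 1) I * Tmat p a m = if I = (m : ℕ) + 1 then 1 else 0 := by
  rw [sum_mul_Tmat (fun a => min ((a : ℤ) + 1) I)]
  have := m.isLt
  split_ifs <;> push_cast <;> omega

lemma NprimeP_Nvec {p k : ℕ} {i : Fin k → ℕ} (hi : ∀ s, i s ≤ p) (j : Fin k → ℤ) (a : Fin p) :
    NprimeP p (Nvec p k i j) a = ∑ s, min ((a : ℤ) + 1) (i s) := by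
  have ha := a.isLt
  unfold NprimeP
  by_cases h : (a : ℕ) < p - 1
  · rw [dif_pos h, Nvec]
    refine sum_congr rfl fun s _ => ?_
    simp only [add_eq_zero, OfNat.ofNat_ne_zero, and_false, ↓reduceIte]
    push_cast
    omega
  · have hone : ((1 : Fin (p + 1)) : ℕ) = 1 := by
      rw [Fin.val_one']
      exact Nat.mod_eq_of_lt (by omega)
    rw [dif_neg h, Nvec, Nvec, ← sum_add_distrib]
    simp only [Fin.val_zero, ↓reduceIte, hone, one_ne_zero]
    refine sum_congr rfl fun s _ => ?_
    have := hi s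
    omega

lemma LvecP_Nvec {p k : ℕ} {i : Fin k → ℕ} (hi : ∀ s, i s ≤ p) (j : Fin k → ℤ) (m : Fin p) :
    LvecP p (Nvec p k i j) m = #{s | i s = (m : ℕ) + 1} := by
  simp only [LvecP, NprimeP_Nvec hi, sum_mul]
  rw [sum_comm, natCast_card_filter]
  exact sum_congr rfl fun s _ => sum_min_mul_Tmat (hi s) m

lemma prod_comp_eq_prod_pow_card {M : Type*} [CommMonoid M] {p k : ℕ} {i : Fin k → ℕ}
    (hi : ∀ s, i s ≤ p) (f : ℕ → M) (hf : f 0 = 1) :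
    ∏ s, f (i s) = ∏ m : Fin p, f (m + 1) ^ #{s | i s = (m : ℕ) + 1} := by
  rw [← prod_fiberwise_of_maps_to (t := range (p + 1)) (g := i)
    fun s _ => mem_range.mpr (Nat.lt_succ_of_le (hi s))]
  simp_rw [prod_congr rfl fun s (hs : s ∈ ({s | i s = _} : Finset _)) =>
    congrArg f (mem_filter.mp hs).2, prod_const]
  rw [prod_range_succ', hf, one_pow, mul_one, Fin.prod_univ_eq_prod_range
    (fun m => f (m + 1) ^ #{s | i s = m + 1})]

lemma Fin.prod_univ_eq_prod_lt_mul {M : Type*} [CommMonoid M] {p : ℕ} (hp : 2 ≤ p)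
    (f : Fin p → M) :
    ∏ m, f m = (∏ m : Fin p, if (m : ℕ) < p - 2 then f m else 1) * f ⟨p - 2, by omega⟩ *
      f ⟨p - 1, by omega⟩ := by
  obtain ⟨q, rfl⟩ : ∃ q, p = q + 2 := ⟨p - 2, by omega⟩
  simp only [Fin.prod_univ_castSucc, Fin.val_castSucc, Fin.val_last, Fin.is_lt, ↓reduceIte,
    lt_self_iff_false, add_lt_iff_neg_left, _root_.not_lt_zero, mul_one, mul_assoc,
    add_tsub_cancel_right, Nat.add_one_sub_one]
  rfl

/-- if some `i^s = p - 1` (equivalently `L_{p-1} ≥ 1`), then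
`d_{p,r} = 2^{L_1} 3^{L_2} ⋯ (p-1)^{L_{p-2}} p^{L_{p-1}-1} (p+1)^{L_p}` for every `r`.
Here `L m` (0-based) is `L_{m+1}`, so the factor for `m < p-2` has base `m+2`. -/
theorem d_uniform (p k : ℕ) (hp : 2 ≤ p) (i : Fin k → ℕ) (hi : ∀ s, i s ≤ p)
    (j : Fin k → ℤ) (hex : ∃ s, (i s : ℕ) = p - 1) (r : ℕ) :
    (prodElt p k i j).coeff ((r : ZMod p)) =
      (∏ m : Fin p, if (m : ℕ) < p - 2 then ((m : ℤ) + 2) ^ (LvecP p (Nvec p k i j) m).toNat else 1) *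
        (p : ℤ) ^ ((LvecP p (Nvec p k i j) ⟨p - 2, by omega⟩).toNat - 1) *
        ((p : ℤ) + 1) ^ (LvecP p (Nvec p k i j) ⟨p - 1, by omega⟩).toNat := by
  have : NeZero p := ⟨by omega⟩
  obtain ⟨s₀, hs₀⟩ := hex
  have hL (m : Fin p) : (LvecP p (Nvec p k i j) m).toNat = #{s | i s = (m : ℕ) + 1} := by
    rw [LvecP_Nvec hi, Int.toNat_natCast]
  have hcard : #{s | i s = p - 2 + 1} ≠ 0 :=
    (card_pos.mpr ⟨s₀, by simp [hs₀]; omega⟩).ne'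
  apply mul_left_cancel₀ (Nat.cast_ne_zero.mpr (NeZero.ne p) : (p : ℤ) ≠ 0)
  calc (p : ℤ) * (prodElt p k i j).coeff r = ∏ s, ((i s : ℤ) + 1) := by
        rw [coeff_prodElt j (by omega : i s₀ + 1 = p), ← mul_prod_erase univ _ (mem_univ s₀), hs₀]
        push_cast [Nat.cast_sub (by omega : 1 ≤ p)]
        ring
    _ = ∏ m : Fin p, ((m : ℤ) + 2) ^ #{s | i s = (m : ℕ) + 1} := by
        rw [prod_comp_eq_prod_pow_card hi (fun v => (v : ℤ) + 1) (by simp)]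
        push_cast
        ring_nf
    _ = _ := by
        rw [Fin.prod_univ_eq_prod_lt_mul hp]
        simp only [hL, show p - 1 + 1 = p by omega]
        rw [← mul_pow_sub_one hcard]
        push_cast [Nat.cast_sub hp, Nat.cast_sub (by omega : 1 ≤ p)]
        ring_nf

end
end
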